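/- Let K be an algebraically closed field of characteristic 0 and n ≥ 9. For t ∈ K, the alternating bilinear bracket on K^n with basis e₁,…,e_n determined by [e₁, e_i] = e_{i+1} for 2 ≤ i ≤ n−1 with i ≠ 3; [e₂, e_i] = (1 − (i−4)t)·e_{i+2} for 4 ≤ i ≤ n−2; [e₃, e_i] = t·e_{i+3} for 4 ≤ i ≤ n−3; and [e_i, e_j] = 0 for all other pairs i < j, satisfies the Jacobi identity if and only if t = 0. -/

import Mathlib

/-- The basis vector `e_{p+1}` of `K^n` (0-based index `p`). -/
def stdVec (K : Type) [Field K] (n p : ℕ) : Fin n → K :=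
  fun k => if (k : ℕ) = p then 1 else 0

/-- The values `[e_{i+1}, e_{j+1}]` (0-based `i < j`) of the bracket of `𝔞_{4,n}(t)`:
`[e₁,e_i] = e_{i+1}` for `2 ≤ i ≤ n−1`, `i ≠ 3`; `[e₂,e_i] = (1−(i−4)t)e_{i+2}` for
`4 ≤ i ≤ n−2`; `[e₃,e_i] = t e_{i+3}` for `4 ≤ i ≤ n−3`; all other brackets `0`. -/
noncomputable def aBrVal {K : Type} [Field K] (n : ℕ) (t : K) (i j : ℕ) : Fin n → K :=
  if i = 0 ∧ 1 ≤ j ∧ j + 2 ≤ n ∧ j ≠ 2 then stdVec K n (j + 1)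
  else if i = 1 ∧ 3 ≤ j ∧ j + 3 ≤ n then (1 - ((j : K) - 3) * t) • stdVec K n (j + 2)
  else if i = 2 ∧ 3 ≤ j ∧ j + 4 ≤ n then t • stdVec K n (j + 3)
  else 0

/-- The alternating bilinear bracket of `𝔞_{4,n}(t)` on `K^n`, determined by the values
`aBrVal` on basis vectors together with antisymmetry. -/
noncomputable def aBr {K : Type} [Field K] (n : ℕ) (t : K) (x y : Fin n → K) :
    Fin n → K :=
  ∑ i : Fin n, ∑ j : Fin n,
    (x i * y j) •
      (if (i : ℕ) < (j : ℕ) then aBrVal n t i j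
       else if (j : ℕ) < (i : ℕ) then -aBrVal n t j i else 0)

/-!
At `t = 0` the bracket is `[x, y] = x₁ • S y - y₁ • S x + x₂ • T y - y₂ • T x`, where `S` and `T`
are coordinate shifts by one and two places (`S = ad e₁`, and `T = ad e₂` on `span (e₃, …, e_n)`)
whose images lie in the common kernel of the coordinates `x₁, x₂`. For a bracket of this shape the
Jacobiator is a combination of values of the commutator `[S, T]`, which vanishes because both kill
`e₃` and `T = S²` on `e₄, e₅, …`. Conversely, the Jacobiator of `e₂, e₃, e₄` is `3t² e₉`.
-/

section PairBracket

variable {R M : Type*} [CommRing R] [AddCommGroup M] [Module R M]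

def pairBracket (f g : M →ₗ[R] R) (S T : M →ₗ[R] M) : M →ₗ[R] M →ₗ[R] M :=
  LinearMap.mk₂ R (fun x y => f x • S y - f y • S x + g x • T y - g y • T x)
    (fun _ _ _ => by simp only [map_add]; module)
    (fun _ _ _ => by simp only [map_smul, smul_eq_mul]; module)
    (fun _ _ _ => by simp only [map_add]; module)
    (fun _ _ _ => by simp only [map_smul, smul_eq_mul]; module)

theorem pairBracket_apply (f g : M →ₗ[R] R) (S T : M →ₗ[R] M) (x y : M) :
    pairBracket f g S T x y = f x • S y - f y • S x + g x • T y - g y • T x := rfl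

theorem pairBracket_jacobi {f g : M →ₗ[R] R} {S T : M →ₗ[R] M} (hST : Commute S T)
    (hfS : ∀ x, f (S x) = 0) (hfT : ∀ x, f (T x) = 0)
    (hgS : ∀ x, g (S x) = 0) (hgT : ∀ x, g (T x) = 0) (x y z : M) :
    pairBracket f g S T (pairBracket f g S T x y) z
      + pairBracket f g S T (pairBracket f g S T y z) x
      + pairBracket f g S T (pairBracket f g S T z x) y = 0 := by
  have hcomm : ∀ v, S (T v) = T (S v) := fun v => LinearMap.congr_fun hST v
  simp only [pairBracket_apply]
  simp only [map_add, map_sub, map_smul, hfS, hfT, hgS, hgT, hcomm]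
  module

end PairBracket

variable {K : Type} [Field K]

theorem stdVec_eq_single {n : ℕ} (i : Fin n) : stdVec K n i = Pi.single i 1 := by
  ext k
  simp [stdVec, Pi.single_apply, Fin.ext_iff]

theorem stdVec_of_le {n p : ℕ} (h : n ≤ p) : stdVec K n p = 0 := by
  ext k
  simp only [stdVec, Pi.zero_apply, ite_eq_right_iff]
  omega

theorem stdVec_apply (n p : ℕ) (k : Fin n) : stdVec K n p k = if (k : ℕ) = p then 1 else 0 := rfl

noncomputable def aBrₗ (n : ℕ) (t : K) : (Fin n → K) →ₗ[K] (Fin n → K) →ₗ[K] (Fin n → K) :=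
  LinearMap.mk₂ K (aBr n t)
    (fun _ _ _ => by simp only [aBr, Pi.add_apply, add_mul, add_smul, Finset.sum_add_distrib])
    (fun _ _ _ => by
      simp only [aBr, Pi.smul_apply, smul_eq_mul, mul_assoc, ← smul_smul, ← Finset.smul_sum])
    (fun _ _ _ => by simp only [aBr, Pi.add_apply, mul_add, add_smul, Finset.sum_add_distrib])
    (fun _ _ _ => by
      simp only [aBr, Pi.smul_apply, smul_eq_mul, mul_left_comm, ← smul_smul, ← Finset.smul_sum])

theorem aBrₗ_apply (n : ℕ) (t : K) (x y : Fin n → K) : aBrₗ n t x y = aBr n t x y := rfl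

theorem aBr_stdVec {n p q : ℕ} (t : K) (hp : p < n) (hq : q < n) :
    aBr n t (stdVec K n p) (stdVec K n q) =
      if p < q then aBrVal n t p q else if q < p then -aBrVal n t q p else 0 := by
  rw [show p = ((⟨p, hp⟩ : Fin n) : ℕ) from rfl, show q = ((⟨q, hq⟩ : Fin n) : ℕ) from rfl,
    stdVec_eq_single, stdVec_eq_single]
  simp only [aBr, Pi.single_apply, ite_mul, one_mul, zero_mul, ite_smul, zero_smul, one_smul,
    Finset.sum_ite_irrel, Finset.sum_const_zero, Finset.sum_ite_eq', Finset.mem_univ, if_true]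

variable (K) in
def shiftOn (n d : ℕ) (P : ℕ → Prop) [DecidablePred P] :
    (Fin n → K) →ₗ[K] (Fin n → K) where
  toFun v k := if P k then v ⟨k - d, by omega⟩ else 0
  map_add' v w := by ext k; by_cases h : P k <;> simp [h]
  map_smul' c v := by ext k; by_cases h : P k <;> simp [h]

theorem shiftOn_apply {n d : ℕ} {P : ℕ → Prop} [DecidablePred P] (v : Fin n → K) (k : Fin n) :
    shiftOn K n d P v k = if P k then v ⟨k - d, by omega⟩ else 0 := rfl

theorem shiftOn_stdVec {n d : ℕ} {P : ℕ → Prop} [DecidablePred P] (hP : ∀ k, P k → d ≤ k)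
    (q : ℕ) : shiftOn K n d P (stdVec K n q) = if P (q + d) then stdVec K n (q + d) else 0 := by
  ext k
  by_cases hk : (k : ℕ) = q + d
  · by_cases hq : P (q + d) <;> simp [shiftOn_apply, stdVec, hk, hq]
  · have : P k → (k : ℕ) - d ≠ q := fun h => by have := hP k h; omega
    by_cases hq : P (q + d) <;> simpa [shiftOn_apply, stdVec, hk, hq] using this

variable (K) in
abbrev shift₁ (n : ℕ) : (Fin n → K) →ₗ[K] (Fin n → K) :=
  shiftOn K n 1 (fun k => 2 ≤ k ∧ k ≠ 3)

variable (K) in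
abbrev shift₂ (n : ℕ) : (Fin n → K) →ₗ[K] (Fin n → K) :=
  shiftOn K n 2 (5 ≤ ·)

theorem shift₁_stdVec (n q : ℕ) :
    shift₁ K n (stdVec K n q) = if 1 ≤ q ∧ q ≠ 2 then stdVec K n (q + 1) else 0 := by
  rw [shiftOn_stdVec (by omega)]
  congr 1
  simp only [eq_iff_iff]
  omega

theorem shift₂_stdVec (n q : ℕ) :
    shift₂ K n (stdVec K n q) = if 3 ≤ q then stdVec K n (q + 2) else 0 := by
  rw [shiftOn_stdVec (by omega)]
  congr 1
  simp only [eq_iff_iff]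
  omega

theorem commute_shift₁_shift₂ (n : ℕ) : Commute (shift₁ K n) (shift₂ K n) := by
  refine LinearMap.ext fun v => funext fun k => ?_
  simp only [Module.End.mul_apply, shiftOn_apply]
  split_ifs <;> first | rfl | omega

theorem aBrVal_zero (n p q : ℕ) :
    aBrVal n (0 : K) p q =
      if p = 0 ∧ 1 ≤ q ∧ q ≠ 2 then stdVec K n (q + 1)
      else if p = 1 ∧ 3 ≤ q then stdVec K n (q + 2) else 0 := by
  simp only [aBrVal, mul_zero, sub_zero, one_smul, zero_smul, ite_self]
  split_ifs <;> first | rfl | omega | exact (stdVec_of_le (by omega)).symm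

theorem aBr_zero_stdVec {n p q : ℕ} (hn : 2 ≤ n) (hp : p < n) (hq : q < n) :
    aBr n 0 (stdVec K n p) (stdVec K n q) =
      pairBracket (LinearMap.proj ⟨0, by omega⟩) (LinearMap.proj ⟨1, by omega⟩)
        (shift₁ K n) (shift₂ K n) (stdVec K n p) (stdVec K n q) := by
  simp only [aBr_stdVec (0 : K) hp hq, aBrVal_zero, pairBracket_apply, LinearMap.coe_proj,
    Function.eval, shift₁_stdVec, shift₂_stdVec, stdVec_apply]
  rcases (show p = 0 ∨ p = 1 ∨ (p ≠ 0 ∧ p ≠ 1) by omega) with rfl | rfl | ⟨hp0, hp1⟩ <;>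
  rcases (show q = 0 ∨ q = 1 ∨ (q ≠ 0 ∧ q ≠ 1) by omega) with rfl | rfl | ⟨hq0, hq1⟩ <;>
  simp [*, Ne.symm] <;> intros <;> omega

theorem aBr_zero_eq_pairBracket {n : ℕ} (hn : 2 ≤ n) (x y : Fin n → K) :
    aBr n 0 x y = pairBracket (LinearMap.proj ⟨0, by omega⟩) (LinearMap.proj ⟨1, by omega⟩)
      (shift₁ K n) (shift₂ K n) x y := by
  rw [← aBrₗ_apply]
  congr 2
  refine LinearMap.ext_basis (Pi.basisFun K (Fin n)) (Pi.basisFun K (Fin n)) fun p q => ?_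
  simp only [Pi.basisFun_apply, ← stdVec_eq_single, aBrₗ_apply]
  exact aBr_zero_stdVec hn p.isLt q.isLt

theorem aBr_zero_jacobi {n : ℕ} (hn : 2 ≤ n) (x y z : Fin n → K) :
    aBr n 0 (aBr n 0 x y) z + aBr n 0 (aBr n 0 y z) x + aBr n 0 (aBr n 0 z x) y = 0 := by
  simp only [aBr_zero_eq_pairBracket hn]
  exact pairBracket_jacobi (commute_shift₁_shift₂ n)
    (fun _ => rfl) (fun _ => rfl) (fun _ => rfl) (fun _ => rfl) x y z

theorem aBr_jacobiator_stdVec {n : ℕ} (hn : 9 ≤ n) (t : K) :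
    aBr n t (aBr n t (stdVec K n 1) (stdVec K n 2)) (stdVec K n 3)
      + aBr n t (aBr n t (stdVec K n 2) (stdVec K n 3)) (stdVec K n 1)
      + aBr n t (aBr n t (stdVec K n 3) (stdVec K n 1)) (stdVec K n 2)
      = (3 * t ^ 2) • stdVec K n 8 := by
  have h6 : 6 ≤ n := by omega
  have h7 : 7 ≤ n := by omega
  have e12 : aBr n t (stdVec K n 1) (stdVec K n 2) = 0 := by
    rw [aBr_stdVec t (by omega) (by omega)]; simp [aBrVal]
  have e23 : aBr n t (stdVec K n 2) (stdVec K n 3) = t • stdVec K n 6 := by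
    rw [aBr_stdVec t (by omega) (by omega)]; simp [aBrVal, h7]
  have e31 : aBr n t (stdVec K n 3) (stdVec K n 1) = -stdVec K n 5 := by
    rw [aBr_stdVec t (by omega) (by omega)]; simp [aBrVal, h6]
  have e61 : aBr n t (stdVec K n 6) (stdVec K n 1) = -((1 - 3 * t) • stdVec K n 8) := by
    rw [aBr_stdVec t (by omega) (by omega)]; norm_num [aBrVal, hn]
  have e52 : aBr n t (stdVec K n 5) (stdVec K n 2) = -(t • stdVec K n 8) := by
    rw [aBr_stdVec t (by omega) (by omega)]; simp [aBrVal, hn]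
  rw [e12, e23, e31]
  simp only [← aBrₗ_apply, map_zero, map_smul, map_neg, LinearMap.zero_apply,
    LinearMap.smul_apply, LinearMap.neg_apply]
  simp only [aBrₗ_apply, e61, e52]
  module

theorem stmt_17_general {K : Type} [Field K] [CharZero K] {n : ℕ}
    (hn : 9 ≤ n) (t : K) :
    (∀ x y z : Fin n → K,
      aBr n t (aBr n t x y) z + aBr n t (aBr n t y z) x + aBr n t (aBr n t z x) y = 0)
      ↔ t = 0 := by
  refine ⟨fun h => ?_, ?_⟩
  · have h8 := congrFun (aBr_jacobiator_stdVec hn t ▸ h (stdVec K n 1) (stdVec K n 2)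
      (stdVec K n 3)) ⟨8, by omega⟩
    simpa [stdVec_apply] using h8
  · rintro rfl x y z
    exact aBr_zero_jacobi (by omega) x y z

/-- For `n ≥ 9` and `t ∈ K`, the bracket of `𝔞_{4,n}(t)` satisfies
the Jacobi identity if and only if `t = 0`. -/
theorem stmt_17 {K : Type} [Field K] [CharZero K] [IsAlgClosed K] {n : ℕ}
    (hn : 9 ≤ n) (t : K) :
    (∀ x y z : Fin n → K,
      aBr n t (aBr n t x y) z + aBr n t (aBr n t y z) x + aBr n t (aBr n t z x) y = 0)
      ↔ t = 0 :=
  stmt_17_general hn t
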